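/- Let (Δ, Γ) be a promise valued template where Δ has finite domain D. Let L ∈ ℕ and let B_1 ∪ B_2 be a partition of {1,…,2L+1} with |B_1| = L+1 and |B_2| = L. If the bimultiset-structure B^{2L+1}_{B_1,B_2}(Δ) is fractionally homomorphic to Γ, then (Δ, Γ) has a block-symmetric promise fractional polymorphism of arity 2L+1 with symmetric blocks B_1 and B_2. -/
import Mathlib


open scoped BigOperators NNReal
open Function

noncomputable section

/-- Costs take values in `ℚ ∪ {+∞}`. -/
abbrev Cost := WithTop ℚ

/-- Embedding of extended rationals into the extended reals. -/
def toE (x : Cost) : EReal := WithTop.recTopCoe ⊤ (fun q : ℚ => ((q : ℝ) : EReal)) x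

/-- A valued structure over signature `τ` (with arities `ar`) and domain `C`. -/
structure VStruct (τ : Type) (ar : τ → ℕ) (C : Type) where
  cost : (f : τ) → ((Fin (ar f)) → C) → Cost

/-- A fractional homomorphism from `Δ` (domain `D`) to `Γ` (domain `C`): a discrete
probability measure on maps `D → C` (given by its weight function, which has countable,
non-empty support and total mass `1`) such that for every function symbol and every tuple
the expected cost in `Γ` is at most the cost in `Δ`. -/
structure FracHom {τ : Type} {ar : τ → ℕ} {D C : Type}
    (Δ : VStruct τ ar D) (Γ : VStruct τ ar C) where
  w : (D → C) → ℝ≥0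
  countable_support : (Function.support w).Countable
  support_nonempty : (Function.support w).Nonempty
  total : HasSum w 1
  le : ∀ (f : τ) (a : Fin (ar f) → D),
    (∑' h : D → C, ((w h : ℝ) : EReal) * toE (Γ.cost f (fun i => h (a i))))
      ≤ toE (Δ.cost f a)

/-- An `m`-ary promise fractional polymorphism of a pair `(Δ, Γ)`: a probability
distribution `wI` supported exactly on the `m` projections (recorded by its weights on
indices), together with a discrete probability measure `wO` on maps `(Fin m → D) → C`
with countable non-empty support, satisfying the expected-cost inequality. -/
structure PFracPol {τ : Type} {ar : τ → ℕ} {D C : Type}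
    (Δ : VStruct τ ar D) (Γ : VStruct τ ar C) (m : ℕ) where
  wI : Fin m → ℝ≥0
  wI_pos : ∀ i, 0 < wI i
  wI_total : ∑ i, wI i = 1
  wO : ((Fin m → D) → C) → ℝ≥0
  wO_countable : (Function.support wO).Countable
  wO_nonempty : (Function.support wO).Nonempty
  wO_total : HasSum wO 1
  le : ∀ (f : τ) (a : Fin m → (Fin (ar f) → D)),
    (∑' g : (Fin m → D) → C,
        ((wO g : ℝ) : EReal) * toE (Γ.cost f (fun t => g (fun i => a i t))))
      ≤ ∑ i, ((wI i : ℝ) : EReal) * toE (Δ.cost f (a i))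

/-- Block-symmetry of a promise fractional polymorphism with respect to the two blocks
`B1`, `B2`: every map in the output support is invariant under permutations preserving both
blocks, and the input weights of each block sum to `|B_j|/m`. -/
def PFracPol.IsBlockSym2 {τ : Type} {ar : τ → ℕ} {D C : Type}
    {Δ : VStruct τ ar D} {Γ : VStruct τ ar C} {m : ℕ}
    (ω : PFracPol Δ Γ m) (B1 B2 : Finset (Fin m)) : Prop :=
  (∀ g ∈ Function.support ω.wO, ∀ π : Equiv.Perm (Fin m),
      (∀ i, π i ∈ B1 ↔ i ∈ B1) → (∀ i, π i ∈ B2 ↔ i ∈ B2) →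
      ∀ x : Fin m → D, g (fun i => x (π i)) = g x) ∧
  (∑ i ∈ B1, ω.wI i) = (B1.card : ℝ≥0) / (m : ℝ≥0) ∧
  (∑ i ∈ B2, ω.wI i) = (B2.card : ℝ≥0) / (m : ℝ≥0)

open Classical in
/-- The bimultiset-structure `B^{2L+1}_{B1,B2}(Δ)`: its domain consists of pairs of
multisets over `D` of sizes `L+1` and `L`, and each cost is `1/(2L+1)` times the minimum,
over tuples `t^1, …, t^k ∈ D^{2L+1}` whose multisets of coordinates on `B1` resp. `B2`
realise the given bimultisets, of the total cost `∑ i f^Δ(t^1_i, …, t^k_i)`. -/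
def biStruct {τ : Type} {ar : τ → ℕ} {D : Type} [Fintype D] [DecidableEq D]
    (Δ : VStruct τ ar D) (L : ℕ) (B1 B2 : Finset (Fin (2 * L + 1))) :
    VStruct τ ar (Sym D (L + 1) × Sym D L) where
  cost f p :=
    (((1 : ℚ) / (2 * L + 1) : ℚ) : Cost) *
      (Finset.univ.inf fun t : Fin (ar f) → Fin (2 * L + 1) → D =>
        if (∀ ℓ, Multiset.map (t ℓ) B1.val = ((p ℓ).1 : Multiset D) ∧
                 Multiset.map (t ℓ) B2.val = ((p ℓ).2 : Multiset D))
        then ∑ i : Fin (2 * L + 1), Δ.cost f (fun ℓ => t ℓ i) else ⊤)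

/-! ### Auxiliary lemmas -/

lemma toE_top : toE ⊤ = ⊤ := rfl
lemma toE_coe (q : ℚ) : toE (q : Cost) = ((q : ℝ) : EReal) := rfl

lemma toE_ne_bot (x : Cost) : toE x ≠ ⊥ := by
  induction x using WithTop.recTopCoe with
  | top => simp [toE_top]
  | coe q => simp [toE_coe]

lemma toE_mono {x y : Cost} (h : x ≤ y) : toE x ≤ toE y := by
  induction y using WithTop.recTopCoe with
  | top => exact le_top
  | coe r =>
    rcases WithTop.le_coe_iff.1 h with ⟨q, rfl, hq⟩
    simpa [toE_coe] using by exact_mod_cast hq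

lemma toE_add (x y : Cost) : toE (x + y) = toE x + toE y := by
  induction x using WithTop.recTopCoe with
  | top => rw [top_add, toE_top, EReal.top_add_of_ne_bot (toE_ne_bot y)]
  | coe q =>
    induction y using WithTop.recTopCoe with
    | top => rw [add_top, toE_top, EReal.add_top_of_ne_bot (toE_ne_bot _)]
    | coe r => rw [← WithTop.coe_add, toE_coe, toE_coe, toE_coe]; push_cast; ring

lemma toE_zero : toE 0 = 0 := by
  show toE ((0 : ℚ) : Cost) = 0
  rw [toE_coe]; norm_num

lemma toE_sum {ι : Type*} (s : Finset ι) (f : ι → Cost) :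
    toE (∑ i ∈ s, f i) = ∑ i ∈ s, toE (f i) := by
  induction s using Finset.cons_induction with
  | empty => simpa using toE_zero
  | cons a s ha ih => rw [Finset.sum_cons, Finset.sum_cons, toE_add, ih]

lemma cost_mul_le {q : ℚ} (hq : 0 ≤ q) {x y : Cost} (h : x ≤ y) :
    (q : Cost) * x ≤ (q : Cost) * y := by
  rcases eq_or_lt_of_le hq with hq0 | hq0
  · subst hq0; simp
  · induction y using WithTop.recTopCoe with
    | top => rw [WithTop.mul_top (by exact_mod_cast hq0.ne')]; exact le_top
    | coe r =>
      rcases WithTop.le_coe_iff.1 h with ⟨p, rfl, hp⟩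
      rw [← WithTop.coe_mul, ← WithTop.coe_mul, WithTop.coe_le_coe]
      exact mul_le_mul_of_nonneg_left hp hq

lemma toE_coe_mul {q : ℚ} (hq : 0 < q) (x : Cost) :
    toE ((q : Cost) * x) = ((q : ℝ) : EReal) * toE x := by
  induction x using WithTop.recTopCoe with
  | top =>
    rw [WithTop.mul_top (by exact_mod_cast hq.ne'), toE_top,
      EReal.coe_mul_top_of_pos (by exact_mod_cast hq)]
  | coe r => rw [← WithTop.coe_mul, toE_coe, toE_coe]; push_cast; ring

lemma ereal_mul_add {r : ℝ} (hr : 0 ≤ r) {x y : EReal} (hx : x ≠ ⊥) (hy : y ≠ ⊥) :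
    (r : EReal) * (x + y) = (r : EReal) * x + (r : EReal) * y := by
  rcases eq_or_lt_of_le hr with hr0 | hr0
  · subst hr0; simp
  · induction x using EReal.rec with
    | bot => exact absurd rfl hx
    | top =>
      rw [EReal.top_add_of_ne_bot hy, EReal.coe_mul_top_of_pos hr0,
        EReal.top_add_of_ne_bot]
      induction y using EReal.rec with
      | bot => exact absurd rfl hy
      | top => rw [EReal.coe_mul_top_of_pos hr0]; simp
      | coe s => rw [← EReal.coe_mul]; exact EReal.coe_ne_bot _
    | coe p =>
      induction y using EReal.rec with
      | bot => exact absurd rfl hy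
      | top =>
        rw [EReal.add_top_of_ne_bot (by simp), EReal.coe_mul_top_of_pos hr0,
          ← EReal.coe_mul, EReal.add_top_of_ne_bot (EReal.coe_ne_bot _)]
      | coe s => rw [← EReal.coe_add, ← EReal.coe_mul, ← EReal.coe_mul, ← EReal.coe_mul,
          ← EReal.coe_add, mul_add]

lemma ereal_sum_ne_bot {ι : Type*} (s : Finset ι) (f : ι → EReal) (hf : ∀ i, f i ≠ ⊥) :
    ∑ i ∈ s, f i ≠ ⊥ := by
  induction s using Finset.cons_induction with
  | empty => simp
  | cons a t ha ih => rw [Finset.sum_cons]; simp [EReal.add_eq_bot_iff, hf a, ih]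

lemma ereal_mul_sum {ι : Type*} {r : ℝ} (hr : 0 ≤ r) (s : Finset ι) (f : ι → EReal)
    (hf : ∀ i, f i ≠ ⊥) :
    (r : EReal) * ∑ i ∈ s, f i = ∑ i ∈ s, (r : EReal) * f i := by
  induction s using Finset.cons_induction with
  | empty => simp
  | cons a t ha ih =>
    rw [Finset.sum_cons, Finset.sum_cons, ereal_mul_add hr (hf a) (ereal_sum_ne_bot t f hf), ih]

lemma exists_map_eq {ι D : Type*} [DecidableEq ι] (d₀ : D) (B : Finset ι)
    (s : Multiset D) (hcard : Multiset.card s = B.card) :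
    ∃ x : ι → D, Multiset.map x B.val = s ∧ ∀ i ∉ B, x i = d₀ := by
  classical
  set l := s.toList with hl
  have hlen : l.length = Multiset.card s := Multiset.length_toList s
  have e : {i // i ∈ B} ≃ Fin l.length :=
    (B.equivFin).trans (finCongr (by rw [hlen, hcard]))
  refine ⟨fun i => if h : i ∈ B then l.get (e ⟨i, h⟩) else d₀, ?_, fun i hi => dif_neg hi⟩
  have h1 : Multiset.map (fun i => if h : i ∈ B then l.get (e ⟨i, h⟩) else d₀) B.val
      = Multiset.map (fun a : {i // i ∈ B} => l.get (e a)) B.attach.val := by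
    rw [Finset.attach_val, Multiset.attach_map_val' _ (fun i => if h : i ∈ B then l.get (e ⟨i, h⟩) else d₀) |>.symm]
    apply Multiset.map_congr rfl
    intro a _
    exact (dif_pos a.2).trans (by congr)
  rw [h1]
  have h2 : Multiset.map (fun a : {i // i ∈ B} => (e a)) B.attach.val
      = (Finset.univ : Finset (Fin l.length)).val := by
    have hnd : (Multiset.map (fun a : {i // i ∈ B} => (e a)) B.attach.val).Nodup :=
      (B.attach.nodup).map e.injective
    have hc : Multiset.card (Multiset.map (fun a : {i // i ∈ B} => (e a)) B.attach.val)
        = Fintype.card (Fin l.length) := by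
      simp only [Multiset.card_map, Fintype.card_fin, ← Finset.attach_val]
      rw [show Multiset.card B.attach.val = B.attach.card from rfl, Finset.card_attach, hlen, hcard]
    have : (⟨_, hnd⟩ : Finset (Fin l.length)) = Finset.univ :=
      Finset.eq_univ_of_card _ (by simpa using hc)
    simpa using congrArg Finset.val this
  calc Multiset.map (fun a : {i // i ∈ B} => l.get (e a)) B.attach.val
      = Multiset.map l.get (Multiset.map (fun a : {i // i ∈ B} => (e a)) B.attach.val) := by
        rw [Multiset.map_map]; rfl
    _ = Multiset.map l.get (Finset.univ : Finset (Fin l.length)).val := by rw [h2]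
    _ = s := by rw [Fin.univ_val_map, List.ofFn_get, hl, Multiset.coe_toList]

lemma perm_val_map {n : ℕ} (B : Finset (Fin n)) (π : Equiv.Perm (Fin n))
    (hπ : ∀ i, π i ∈ B ↔ i ∈ B) : B.val.map π = B.val := by
  classical
  have himg : B.image π = B :=
    Finset.eq_of_subset_of_card_le
      (Finset.image_subset_iff.2 (fun i hi => (hπ i).mpr hi))
      (le_of_eq (Finset.card_image_of_injective _ π.injective).symm)
  rw [← Finset.image_val_of_injOn π.injective.injOn, himg]

/-- converse of the forward lemma: if the bimultiset-structure
`B^{2L+1}_{B1,B2}(Δ)` is fractionally homomorphic to `Γ`, then the promise valued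
template `(Δ, Γ)` has a block-symmetric promise fractional polymorphism of arity `2L+1`
with symmetric blocks `B_1` and `B_2`. -/
theorem biStruct_fracHom_converse {τ : Type} {ar : τ → ℕ} {D C : Type}
    [Fintype D] [DecidableEq D]
    (Δ : VStruct τ ar D) (Γ : VStruct τ ar C) (_template : Nonempty (FracHom Δ Γ))
    (L : ℕ) (B1 B2 : Finset (Fin (2 * L + 1)))
    (hdisj : Disjoint B1 B2) (hunion : B1 ∪ B2 = Finset.univ)
    (h1 : B1.card = L + 1) (h2 : B2.card = L)
    (h : Nonempty (FracHom (biStruct Δ L B1 B2) Γ)) :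
    ∃ ω : PFracPol Δ Γ (2 * L + 1), ω.IsBlockSym2 B1 B2 := by
  classical
  obtain ⟨χ⟩ := h
  -- the canonical map to bimultisets
  let φ : (Fin (2 * L + 1) → D) → Sym D (L + 1) × Sym D L := fun x =>
    (⟨Multiset.map x B1.val, by rw [Multiset.card_map]; exact h1⟩,
     ⟨Multiset.map x B2.val, by rw [Multiset.card_map]; exact h2⟩)
  have hφ_surj : Function.Surjective φ := by
    rintro ⟨s1, s2⟩
    have hs1 : Multiset.card (s1 : Multiset D) = L + 1 := s1.2
    have hs2 : Multiset.card (s2 : Multiset D) = L := s2.2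
    have hpos : 0 < Multiset.card (s1 : Multiset D) := by rw [hs1]; omega
    obtain ⟨d₀, _⟩ := Multiset.card_pos_iff_exists_mem.1 hpos
    obtain ⟨x₁, hx₁, -⟩ := exists_map_eq d₀ B1 (s1 : Multiset D) (by rw [hs1, h1])
    obtain ⟨x₂, hx₂, -⟩ := exists_map_eq d₀ B2 (s2 : Multiset D) (by rw [hs2, h2])
    refine ⟨fun i => if i ∈ B1 then x₁ i else x₂ i, ?_⟩
    have hm1 : Multiset.map (fun i => if i ∈ B1 then x₁ i else x₂ i) B1.val
        = (s1 : Multiset D) := by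
      rw [← hx₁]
      exact Multiset.map_congr rfl (fun i hi => if_pos (Finset.mem_def.mpr hi))
    have hm2 : Multiset.map (fun i => if i ∈ B1 then x₁ i else x₂ i) B2.val
        = (s2 : Multiset D) := by
      rw [← hx₂]
      refine Multiset.map_congr rfl (fun i hi => if_neg ?_)
      exact fun hmem => (Finset.disjoint_left.1 hdisj hmem) (Finset.mem_def.mpr hi)
    exact Prod.ext (Subtype.ext hm1) (Subtype.ext hm2)
  let comp : ((Sym D (L + 1) × Sym D L) → C) → ((Fin (2 * L + 1) → D) → C) :=
    fun h' => h' ∘ φ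
  have hinj : Function.Injective comp := hφ_surj.injective_comp_right
  -- the support of the extended weights
  set wO : ((Fin (2 * L + 1) → D) → C) → ℝ≥0 := Function.extend comp χ.w 0 with hwO
  have hsupp0 : ∀ g, wO g ≠ 0 →
      ∃ h', comp h' = g ∧ χ.w h' ≠ 0 := by
    intro g hg
    by_cases hr : ∃ h', comp h' = g
    · obtain ⟨h', rfl⟩ := hr
      refine ⟨h', rfl, ?_⟩
      rwa [hwO, hinj.extend_apply] at hg
    · exact absurd (hwO ▸ Function.extend_apply' _ _ _ hr) hg
  have hmn0 : ((2 * L + 1 : ℕ) : ℝ≥0) ≠ 0 := Nat.cast_ne_zero.mpr (by omega)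
  refine ⟨{ wI := fun _ => (((2 * L + 1 : ℕ) : ℝ≥0))⁻¹
            wI_pos := fun _ => by positivity
            wI_total := by
              rw [Finset.sum_const, Finset.card_univ, Fintype.card_fin, nsmul_eq_mul]
              exact mul_inv_cancel₀ hmn0
            wO := wO
            wO_countable := ?_
            wO_nonempty := ?_
            wO_total := (hasSum_extend_zero hinj).mpr χ.total
            le := ?_ }, ?_, ?_, ?_⟩
  · refine (χ.countable_support.image comp).mono ?_
    intro g hg
    obtain ⟨h', rfl, hw⟩ := hsupp0 g hg
    exact ⟨h', hw, rfl⟩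
  · obtain ⟨h₀, hh₀⟩ := χ.support_nonempty
    exact ⟨comp h₀, by rw [Function.mem_support, hwO, hinj.extend_apply]; exact hh₀⟩
  · -- the expected-cost inequality
    intro f a
    set aχ : Fin (ar f) → (Sym D (L + 1) × Sym D L) := fun t => φ (fun i => a i t) with haχ
    have hq : (0 : ℚ) < (1 : ℚ) / (2 * L + 1) := by positivity
    have hsub : Function.support (fun g : (Fin (2 * L + 1) → D) → C =>
        ((wO g : ℝ) : EReal) *
          toE (Γ.cost f (fun t => g (fun i => a i t)))) ⊆ Set.range comp := by
      intro g hg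
      by_cases hr : ∃ h', comp h' = g
      · exact hr
      · exfalso
        apply hg
        have : wO g = 0 := hwO ▸ Function.extend_apply' _ _ _ hr
        simp [this]
    have hstep : (∑' g : (Fin (2 * L + 1) → D) → C,
          ((wO g : ℝ) : EReal) *
            toE (Γ.cost f (fun t => g (fun i => a i t))))
        = ∑' h' : (Sym D (L + 1) × Sym D L) → C,
            ((χ.w h' : ℝ) : EReal) * toE (Γ.cost f (fun i => h' (aχ i))) := by
      rw [← hinj.tsum_eq hsub]
      congr 1
      funext h'
      have : wO (comp h') = χ.w h' := hwO ▸ hinj.extend_apply _ _ _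
      rw [this]
      rfl
    have hcond : ∀ ℓ, Multiset.map ((fun ℓ' (i : Fin (2 * L + 1)) => a i ℓ') ℓ) B1.val
          = ((aχ ℓ).1 : Multiset D) ∧
        Multiset.map ((fun ℓ' (i : Fin (2 * L + 1)) => a i ℓ') ℓ) B2.val
          = ((aχ ℓ).2 : Multiset D) := fun ℓ => ⟨rfl, rfl⟩
    have hcost : (biStruct Δ L B1 B2).cost f aχ
        ≤ (((1 : ℚ) / (2 * L + 1) : ℚ) : Cost) * ∑ i : Fin (2 * L + 1), Δ.cost f (a i) := by
      show (((1 : ℚ) / (2 * L + 1) : ℚ) : Cost) * _ ≤ _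
      apply cost_mul_le hq.le
      calc (Finset.univ.inf fun t : Fin (ar f) → Fin (2 * L + 1) → D =>
              if (∀ ℓ, Multiset.map (t ℓ) B1.val = (((aχ ℓ).1 : Sym D (L+1)) : Multiset D) ∧
                       Multiset.map (t ℓ) B2.val = (((aχ ℓ).2 : Sym D L) : Multiset D))
              then ∑ i : Fin (2 * L + 1), Δ.cost f (fun ℓ => t ℓ i) else ⊤)
          ≤ _ := Finset.inf_le (Finset.mem_univ (fun ℓ' (i : Fin (2 * L + 1)) => a i ℓ'))
        _ = ∑ i : Fin (2 * L + 1), Δ.cost f (a i) := if_pos hcond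
    have hfinal : toE ((((1 : ℚ) / (2 * L + 1) : ℚ) : Cost)
          * ∑ i : Fin (2 * L + 1), Δ.cost f (a i))
        = ∑ i : Fin (2 * L + 1),
            (((((2 * L + 1 : ℕ) : ℝ≥0))⁻¹ : ℝ) : EReal) * toE (Δ.cost f (a i)) := by
      rw [toE_coe_mul hq, toE_sum,
        ereal_mul_sum (by positivity) _ _ (fun i => toE_ne_bot _)]
      have : ((((1 : ℚ) / (2 * L + 1) : ℚ) : ℝ) : EReal)
          = (((((2 * L + 1 : ℕ) : ℝ≥0))⁻¹ : ℝ) : EReal) := by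
        norm_num [NNReal.coe_inv]
      rw [this]
    calc (∑' g : (Fin (2 * L + 1) → D) → C,
          ((wO g : ℝ) : EReal) *
            toE (Γ.cost f (fun t => g (fun i => a i t))))
        = ∑' h' : (Sym D (L + 1) × Sym D L) → C,
            ((χ.w h' : ℝ) : EReal) * toE (Γ.cost f (fun i => h' (aχ i))) := hstep
      _ ≤ toE ((biStruct Δ L B1 B2).cost f aχ) := χ.le f aχ
      _ ≤ toE ((((1 : ℚ) / (2 * L + 1) : ℚ) : Cost)
            * ∑ i : Fin (2 * L + 1), Δ.cost f (a i)) := toE_mono hcost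
      _ = _ := hfinal
  · -- block symmetry of the support
    intro g hg π hπ1 hπ2 x
    obtain ⟨h', rfl, -⟩ := hsupp0 g (Function.mem_support.1 hg)
    show h' (φ (fun i => x (π i))) = h' (φ x)
    congr 1
    have hB1 : Multiset.map (fun i => x (π i)) B1.val = Multiset.map x B1.val := by
      conv_rhs => rw [← perm_val_map B1 π hπ1]
      rw [Multiset.map_map]
      rfl
    have hB2 : Multiset.map (fun i => x (π i)) B2.val = Multiset.map x B2.val := by
      conv_rhs => rw [← perm_val_map B2 π hπ2]
      rw [Multiset.map_map]
      rfl
    exact Prod.ext (Subtype.ext hB1) (Subtype.ext hB2)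
  · -- weight of block B1
    rw [Finset.sum_const, nsmul_eq_mul, h1, div_eq_mul_inv]
  · -- weight of block B2
    rw [Finset.sum_const, nsmul_eq_mul, h2, div_eq_mul_inv]
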